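/- Let B and C be unital C*-algebras, Φ : B → C a unital completely positive map, U a set of unitary elements of B such that Φ(u) is unitary in C for every u ∈ U, and m a state on C satisfying m(Φ(u)* y Φ(u)) = m(y) for every y ∈ C and every u ∈ U. Then the state m ∘ Φ on B satisfies (m ∘ Φ)(u* x u) = (m ∘ Φ)(x) for every x ∈ B and every u ∈ U. -/

import Mathlib

/-!
For `a = ![u, 1, b]`, complete positivity of `Φ` and positivity of `m` make
`(v, w) ↦ m (star v ⬝ᵥ [Φ (star aᵢ * aⱼ)] *ᵥ w)` a positive sesquilinear form on `C³`.
When `u` and `Φ u` are isometries and `Φ 1 = 1`, the vector `![1, -Φ u, 0]` is null for it,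
so by Cauchy–Schwarz it is orthogonal to `![0, 0, w]`. This says that `u` lies in the
multiplicative domain of `Φ` as seen by `m`:
`m (Φ (star u * b) * w) = m (star (Φ u) * Φ b * w)` and
`m (star w * Φ (b * u)) = m (star w * Φ b * Φ u)`. Hence
`m (Φ (star u * x * u)) = m (star (Φ u) * Φ x * Φ u) = m (Φ x)`.
-/

open scoped ComplexOrder

/-- A linear map `Φ : B → C` between (star) algebras is *completely positive* if for every
`n ≥ 1` the induced map `Mₙ(B) → Mₙ(C)` (applying `Φ` entrywise) maps positive elements to
positive elements, where an element of a C*-algebra is positive iff it is of the form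
`star N * N`. -/
def IsCompletelyPositive {B C : Type*} [Ring B] [StarRing B] [Module ℂ B]
    [Ring C] [StarRing C] [Module ℂ C] (Φ : B →ₗ[ℂ] C) : Prop :=
  ∀ (n : ℕ) (M : Matrix (Fin n) (Fin n) B),
    (∃ N : Matrix (Fin n) (Fin n) B, M = N.conjTranspose * N) →
    ∃ P : Matrix (Fin n) (Fin n) C, M.map Φ = P.conjTranspose * P

section

open ComplexConjugate Matrix

theorem eq_zero_of_forall_nonneg_mul_sq_add_mul {K : Type*} [Field K] [LinearOrder K]
    [IsStrictOrderedRing K] {a b : K} (h : ∀ t : K, 0 ≤ a * t ^ 2 + b * t) : b = 0 := by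
  have hd := discrim_le_zero (a := a) (b := b) (c := 0) fun t => by simpa [sq] using h t
  rw [discrim, mul_zero, sub_zero] at hd
  exact pow_eq_zero_iff two_ne_zero |>.mp (le_antisymm hd (sq_nonneg b))

namespace LinearMap

variable {M : Type*} [AddCommGroup M] [Module ℂ M] {B : M →ₗ⋆[ℂ] M →ₗ[ℂ] ℂ}

theorem apply_add_smul_add_smul (B : M →ₗ⋆[ℂ] M →ₗ[ℂ] ℂ) (x y : M) (c : ℂ) :
    B (x + c • y) (x + c • y) = B x x + c * B x y + conj c * B y x + conj c * c * B y y := by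
  simp only [map_add, map_smulₛₗ, add_apply, smul_apply, smul_eq_mul, RingHom.id_apply]
  ring

theorem IsNonneg.conj_apply_self (hB : B.IsNonneg) (x : M) : conj (B x x) = B x x :=
  Complex.conj_eq_iff_im.mpr (Complex.nonneg_iff.mp (hB.nonneg x)).2.symm

theorem IsNonneg.isSymm (hB : B.IsNonneg) : B.IsSymm := by
  refine ⟨fun x y => ?_⟩
  have h₁ := hB.conj_apply_self (x + (1 : ℂ) • y)
  have h₂ := hB.conj_apply_self (x + Complex.I • y)
  rw [apply_add_smul_add_smul] at h₁ h₂
  simp only [map_add, map_mul, map_one, one_mul, map_neg, neg_neg,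
    Complex.conj_I, hB.conj_apply_self x, hB.conj_apply_self y] at h₁ h₂
  linear_combination (h₁ + Complex.I * h₂) / 2 +
    (conj (B x y) - conj (B y x) + B x y - B y x) / 2 * Complex.I_sq

theorem IsNonneg.apply_eq_zero_of_apply_self_eq_zero (hB : B.IsNonneg) {x : M} (hx : B x x = 0)
    (y : M) : B x y = 0 := by
  have hre (y : M) : (B x y).re = 0 := by
    refine eq_zero_of_forall_nonneg_mul_sq_add_mul (a := (B y y).re / 2) fun t => ?_
    have h := (Complex.nonneg_iff.mp (hB.nonneg (x + (t : ℂ) • y))).1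
    rw [apply_add_smul_add_smul, hx, ← hB.isSymm.eq x y, Complex.conj_ofReal] at h
    simp only [zero_add, Complex.add_re, ← Complex.ofReal_mul, Complex.re_ofReal_mul,
      Complex.conj_re] at h
    linarith
  refine Complex.ext (hre y) ?_
  simpa using hre (-Complex.I • y)

end LinearMap

namespace Matrix

variable {n C : Type*} [Fintype n] [Ring C] [StarRing C] [Algebra ℂ C] [StarModule ℂ C]

def sesqForm (m : C →ₗ[ℂ] ℂ) (A : Matrix n n C) : (n → C) →ₗ⋆[ℂ] (n → C) →ₗ[ℂ] ℂ :=
  LinearMap.mk₂'ₛₗ _ _ (fun v w => m (star v ⬝ᵥ A *ᵥ w))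
    (fun v v' w => by rw [star_add, add_dotProduct, map_add])
    (fun c v w => by rw [star_smul, smul_dotProduct, map_smul, starRingEnd_apply])
    (fun v w w' => by rw [mulVec_add, dotProduct_add, map_add])
    (fun c v w => by rw [mulVec_smul, dotProduct_smul, map_smul, RingHom.id_apply])

theorem sesqForm_apply (m : C →ₗ[ℂ] ℂ) (A : Matrix n n C) (v w : n → C) :
    sesqForm m A v w = m (star v ⬝ᵥ A *ᵥ w) :=
  rfl

theorem isNonneg_sesqForm_conjTranspose_mul_self {m : C →ₗ[ℂ] ℂ}
    (hm : ∀ y, 0 ≤ m (star y * y)) (P : Matrix n n C) : (sesqForm m (Pᴴ * P)).IsNonneg := by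
  refine ⟨fun v => ?_⟩
  rw [sesqForm_apply, ← mulVec_mulVec, dotProduct_mulVec, ← star_mulVec, dotProduct, map_sum]
  exact Finset.sum_nonneg fun i _ => hm _

end Matrix

variable {B C : Type*} [Ring B] [StarRing B] [Module ℂ B]
    [Ring C] [StarRing C] [Algebra ℂ C] {Φ : B →ₗ[ℂ] C}

theorem IsCompletelyPositive.exists_map_vecMulVec_eq (hΦ : IsCompletelyPositive Φ) {n : ℕ}
    (a : Fin n → B) : ∃ P : Matrix (Fin n) (Fin n) C, (vecMulVec (star a) a).map Φ = Pᴴ * P := by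
  cases n with
  | zero => exact ⟨0, Subsingleton.elim _ _⟩
  | succ n =>
    refine hΦ _ _ ⟨of fun k j => if k = 0 then a j else 0, ?_⟩
    ext i j
    simp [mul_apply, vecMulVec_apply]

theorem IsCompletelyPositive.isNonneg_sesqForm [StarModule ℂ C] (hΦ : IsCompletelyPositive Φ)
    {m : C →ₗ[ℂ] ℂ} (hm : ∀ y, 0 ≤ m (star y * y)) {n : ℕ} (a : Fin n → B) :
    (sesqForm m ((vecMulVec (star a) a).map Φ)).IsNonneg := by
  obtain ⟨P, hP⟩ := hΦ.exists_map_vecMulVec_eq a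
  exact hP ▸ isNonneg_sesqForm_conjTranspose_mul_self hm P

namespace IsCompletelyPositive

variable [StarModule ℂ C] (hΦ : IsCompletelyPositive Φ) {m : C →ₗ[ℂ] ℂ}
  (hm : ∀ y, 0 ≤ m (star y * y)) (hΦ_one : Φ 1 = 1) {u : B} (hu : star u * u = 1)
  (hΦu : star (Φ u) * Φ u = 1)
include hΦ hm hΦ_one hu hΦu

theorem sesqForm_apply_self_eq_zero (b : B) :
    sesqForm m ((vecMulVec (star ![u, 1, b]) ![u, 1, b]).map Φ) ![1, -Φ u, 0] ![1, -Φ u, 0]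
      = 0 := by
  set f := sesqForm m ((vecMulVec (star ![u, 1, b]) ![u, 1, b]).map Φ)
  have hf : f.IsNonneg := hΦ.isNonneg_sesqForm hm _
  have hsplit : (![1, -Φ u, 0] : Fin 3 → C) = ![1, 0, 0] - ![0, Φ u, 0] := by
    ext i; fin_cases i <;> simp
  have h₀₀ : f ![1, 0, 0] ![1, 0, 0] = m 1 := by
    simp [f, sesqForm_apply, dotProduct, mulVec, Fin.sum_univ_three, hu, hΦ_one]
  have h₁₀ : f ![0, Φ u, 0] ![1, 0, 0] = m 1 := by
    simp [f, sesqForm_apply, dotProduct, mulVec, Fin.sum_univ_three, hΦu]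
  have h₁₁ : f ![0, Φ u, 0] ![0, Φ u, 0] = m 1 := by
    simp [f, sesqForm_apply, dotProduct, mulVec, Fin.sum_univ_three, hΦu, hΦ_one]
  -- `Φ (star u) = star (Φ u)` is not available; hermitian symmetry of `f` replaces it.
  have h₀₁ : f ![1, 0, 0] ![0, Φ u, 0] = m 1 := by
    rw [← hf.isSymm.eq, h₁₀, ← h₁₁, hf.conj_apply_self]
  rw [hsplit, map_sub, map_sub, LinearMap.sub_apply, LinearMap.sub_apply, h₀₀, h₀₁, h₁₀, h₁₁]
  ring

theorem apply_map_star_mul_mul_eq (b : B) (w : C) :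
    m (Φ (star u * b) * w) = m (star (Φ u) * Φ b * w) := by
  have h := (hΦ.isNonneg_sesqForm hm ![u, 1, b]).apply_eq_zero_of_apply_self_eq_zero
    (hΦ.sesqForm_apply_self_eq_zero hm hΦ_one hu hΦu b) ![0, 0, w]
  simpa [sesqForm_apply, dotProduct, mulVec, Fin.sum_univ_three, mul_add, ← sub_eq_add_neg,
    sub_eq_zero, mul_assoc] using h

theorem apply_star_mul_map_mul_eq (b : B) (w : C) :
    m (star w * Φ (b * u)) = m (star w * Φ b * Φ u) := by
  have h := (hΦ.isNonneg_sesqForm hm ![u, 1, star b]).isSymm.eq_iff.mp <|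
    (hΦ.isNonneg_sesqForm hm ![u, 1, star b]).apply_eq_zero_of_apply_self_eq_zero
    (hΦ.sesqForm_apply_self_eq_zero hm hΦ_one hu hΦu (star b)) ![0, 0, w]
  simpa [sesqForm_apply, dotProduct, mulVec, Fin.sum_univ_three, ← sub_eq_add_neg, mul_sub,
    map_sub, sub_eq_zero, mul_assoc] using h

end IsCompletelyPositive

end

theorem state_comp_ucp_invariant_general
    {B C : Type*}
    [NormedRing B] [StarRing B] [NormedAlgebra ℂ B]
    [NormedRing C] [StarRing C] [NormedAlgebra ℂ C]
    [StarModule ℂ C]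
    (Φ : B →ₗ[ℂ] C) (hΦ_one : Φ 1 = 1) (hΦ_cp : IsCompletelyPositive Φ)
    (U : Set B) (hU : ∀ u ∈ U, u ∈ unitary B)
    (hΦU : ∀ u ∈ U, Φ u ∈ unitary C)
    (m : C →ₗ[ℂ] ℂ) (hm_pos : ∀ y : C, 0 ≤ m (star y * y))
    (hm_inv : ∀ u ∈ U, ∀ y : C, m (star (Φ u) * y * Φ u) = m y) :
    ∀ u ∈ U, ∀ x : B, m (Φ (star u * x * u)) = m (Φ x) := by
  intro u hu x
  have hu' : star u * u = 1 := Unitary.star_mul_self_of_mem (hU u hu)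
  have hΦu : star (Φ u) * Φ u = 1 := Unitary.star_mul_self_of_mem (hΦU u hu)
  calc m (Φ (star u * x * u)) = m (Φ (star u * x) * Φ u) := by
        simpa using hΦ_cp.apply_star_mul_map_mul_eq hm_pos hΦ_one hu' hΦu (star u * x) 1
    _ = m (star (Φ u) * Φ x * Φ u) :=
        hΦ_cp.apply_map_star_mul_mul_eq hm_pos hΦ_one hu' hΦu x (Φ u)
    _ = m (Φ x) := hm_inv u hu _

/-- Let `B` and `C` be unital C*-algebras, `Φ : B → C` a unital completely positive map,
`U` a set of unitary elements of `B` such that `Φ u` is unitary in `C` for every `u ∈ U`,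
and `m` a state on `C` satisfying `m (star (Φ u) * y * Φ u) = m y` for every `y ∈ C` and
every `u ∈ U`.  Then the state `m ∘ Φ` on `B` satisfies
`(m ∘ Φ) (star u * x * u) = (m ∘ Φ) x` for every `x ∈ B` and every `u ∈ U`. -/
theorem state_comp_ucp_invariant
    {B C : Type*}
    [NormedRing B] [StarRing B] [CStarRing B] [NormedAlgebra ℂ B]
    [StarModule ℂ B] [CompleteSpace B]
    [NormedRing C] [StarRing C] [CStarRing C] [NormedAlgebra ℂ C]
    [StarModule ℂ C] [CompleteSpace C]
    (Φ : B →ₗ[ℂ] C) (hΦ_one : Φ 1 = 1) (hΦ_cp : IsCompletelyPositive Φ)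
    (U : Set B) (hU : ∀ u ∈ U, u ∈ unitary B)
    (hΦU : ∀ u ∈ U, Φ u ∈ unitary C)
    (m : C →ₗ[ℂ] ℂ) (hm_pos : ∀ y : C, 0 ≤ m (star y * y)) (hm_one : m 1 = 1)
    (hm_inv : ∀ u ∈ U, ∀ y : C, m (star (Φ u) * y * Φ u) = m y) :
    ∀ u ∈ U, ∀ x : B, m (Φ (star u * x * u)) = m (Φ x) :=
  state_comp_ucp_invariant_general Φ hΦ_one hΦ_cp U hU hΦU m hm_pos hm_inv
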